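/- Let T be a meet-tree, Γ a semibranch which is not a branch, with maximum γ, and let A, B, C be subsets such that no element of the meet-subsemilattice generated by A ∪ C is ≥ γ. Then A is γ-cone-independent of B over C if and only if A is Γ-semibranch-independent of B over C. -/
import Mathlib


/-- The meet-subsemilattice generated by a set `X`. -/
inductive MeetGen {T : Type*} [SemilatticeInf T] (X : Set T) : T → Prop
  | base {x : T} : x ∈ X → MeetGen X x
  | inf {a b : T} : MeetGen X a → MeetGen X b → MeetGen X (a ⊓ b)

/-- `⟨X⟩_γ`: the meet-subsemilattice generated by `X ∪ {γ}`. -/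
def clγ {T : Type*} [SemilatticeInf T] (γ : T) (X : Set T) : Set T :=
  {t : T | MeetGen (X ∪ {γ}) t}

/-- `A` is `γ`-cone-independent of `B` over `C`. -/
def ConeIndep {T : Type*} [SemilatticeInf T] (γ : T) (A C B : Set T) : Prop :=
  (∀ a ∈ clγ γ (A ∪ C), ∀ b ∈ clγ γ (B ∪ C), b ≤ a →
      ∃ c ∈ clγ γ C, b ≤ c ∧ c ≤ a) ∧
  (∀ a ∈ clγ γ (A ∪ C), ∀ b ∈ clγ γ (B ∪ C), a ⊓ b ∉ clγ γ C →
      ∃ c ∈ clγ γ C, a ⊓ c ≠ b ⊓ c)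

/-- The substructure generated by `X` in the language of semibranched meet-trees
for the semibranch `Γ = {x | x ≤ γ}`, whose projection is `π_Γ(a) = a ⊓ γ`:
the closure of `X` under meet and `a ↦ a ⊓ γ`. -/
inductive SBGen {T : Type*} [SemilatticeInf T] (γ : T) (X : Set T) : T → Prop
  | base {x : T} : x ∈ X → SBGen γ X x
  | inf {a b : T} : SBGen γ X a → SBGen γ X b → SBGen γ X (a ⊓ b)
  | proj {a : T} : SBGen γ X a → SBGen γ X (a ⊓ γ)

/-- `⟨X⟩_Γ` for `Γ = {x | x ≤ γ}`. -/
def clΓ {T : Type*} [SemilatticeInf T] (γ : T) (X : Set T) : Set T :=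
  {t : T | SBGen γ X t}

/-- `A` is `Γ`-semibranch-independent of `B` over `C`, for the semibranch
`Γ = {x | x ≤ γ}` (with projection `π_Γ(a) = a ⊓ γ`). -/
def SBIndep {T : Type*} [SemilatticeInf T] (γ : T) (A C B : Set T) : Prop :=
  (∀ a ∈ clΓ γ (A ∪ C), ∀ b ∈ clΓ γ (B ∪ C), b ≤ a →
      ∃ c ∈ clΓ γ C, b ≤ c ∧ c ≤ a) ∧
  (∀ a ∈ clΓ γ (A ∪ C), ∀ b ∈ clΓ γ (B ∪ C), a ⊓ γ = b ⊓ γ → a ⊓ b ∉ clΓ γ C →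
      ∃ c ∈ clΓ γ C, a ⊓ c ≠ b ⊓ c)

section Aux
variable {T : Type*} [SemilatticeInf T] {γ : T} {X : Set T}

lemma clΓ_subset_clγ {t : T} (h : t ∈ clΓ γ X) : t ∈ clγ γ X := by
  induction h with
  | base hx => exact MeetGen.base (Or.inl hx)
  | inf _ _ iha ihb => exact MeetGen.inf iha ihb
  | proj _ ih => exact MeetGen.inf ih (MeetGen.base (Or.inr rfl))

lemma clγ_cases {t : T} (h : t ∈ clγ γ X) : t ∈ clΓ γ X ∨ t = γ := by
  induction h with
  | base hx =>
    rcases hx with hx | hx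
    · exact Or.inl (SBGen.base hx)
    · exact Or.inr hx
  | inf _ _ iha ihb =>
    rcases iha with h1 | rfl <;> rcases ihb with h2 | rfl
    · exact Or.inl (SBGen.inf h1 h2)
    · exact Or.inl (SBGen.proj h1)
    · exact Or.inl (by rw [inf_comm]; exact SBGen.proj h2)
    · exact Or.inr (inf_idem _)

lemma clΓ_cases {t : T} (h : t ∈ clΓ γ X) :
    MeetGen X t ∨ ∃ m, MeetGen X m ∧ t = m ⊓ γ := by
  induction h with
  | base hx => exact Or.inl (MeetGen.base hx)
  | inf _ _ iha ihb =>
    rcases iha with h1 | ⟨m, hm, rfl⟩ <;> rcases ihb with h2 | ⟨m', hm', rfl⟩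
    · exact Or.inl (MeetGen.inf h1 h2)
    · exact Or.inr ⟨_, MeetGen.inf h1 hm', (inf_assoc _ _ _).symm⟩
    · exact Or.inr ⟨_, MeetGen.inf hm h2, inf_right_comm _ _ _⟩
    · exact Or.inr ⟨_, MeetGen.inf hm hm', by rw [inf_inf_inf_comm, inf_idem]⟩
  | proj _ ih =>
    rcases ih with h1 | ⟨m, hm, rfl⟩
    · exact Or.inr ⟨_, h1, rfl⟩
    · exact Or.inr ⟨m, hm, by rw [inf_assoc, inf_idem]⟩

end Aux

/-- If no element of the meet-subsemilattice generated by `A ∪ C` lies above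
`γ`, then `γ`-cone-independence coincides with `Γ`-semibranch-independence for
the semibranch `Γ = {x | x ≤ γ}`. -/
theorem coneIndep_iff_sbIndep {T : Type*} [SemilatticeInf T]
    (hsl : ∀ a : T, IsChain (· ≤ ·) {x : T | x < a})
    (γ : T) (A B C : Set T)
    (hAC : ∀ t : T, MeetGen (A ∪ C) t → ¬ γ ≤ t) :
    ConeIndep γ A C B ↔ SBIndep γ A C B := by
  have notle : ∀ t ∈ clΓ γ (A ∪ C), ¬ γ ≤ t := by
    intro t ht hle
    rcases clΓ_cases ht with h | ⟨m, hm, rfl⟩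
    · exact hAC t h hle
    · exact hAC m hm (le_trans hle inf_le_left)
  have hγC : γ ∈ clγ γ C := MeetGen.base (Or.inr rfl)
  constructor
  · rintro ⟨h1, h2⟩
    constructor
    · intro a ha b hb hba
      obtain ⟨c, hc, hbc, hca⟩ :=
        h1 a (clΓ_subset_clγ ha) b (clΓ_subset_clγ hb) hba
      rcases clγ_cases hc with hc' | rfl
      · exact ⟨c, hc', hbc, hca⟩
      · exact absurd hca (notle a ha)
    · intro a ha b hb hγab hab
      have hab' : a ⊓ b ∉ clγ γ C := by
        intro h
        rcases clγ_cases h with h' | h'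
        · exact hab h'
        · exact notle a ha (h' ▸ inf_le_left)
      obtain ⟨c, hc, hne⟩ :=
        h2 a (clΓ_subset_clγ ha) b (clΓ_subset_clγ hb) hab'
      rcases clγ_cases hc with hc' | rfl
      · exact ⟨c, hc', hne⟩
      · exact absurd hγab hne
  · rintro ⟨h1, h2⟩
    constructor
    · intro a ha b hb hba
      rcases clγ_cases ha with ha' | heqa
      · rcases clγ_cases hb with hb' | heqb
        · obtain ⟨c, hc, hbc, hca⟩ := h1 a ha' b hb' hba
          exact ⟨c, clΓ_subset_clγ hc, hbc, hca⟩
        · exact absurd (heqb ▸ hba) (notle a ha')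
      · exact ⟨γ, hγC, heqa ▸ hba, heqa.ge⟩
    · intro a ha b hb hab
      rcases clγ_cases ha with ha' | heqa
      · rcases clγ_cases hb with hb' | heqb
        · by_cases heq : a ⊓ γ = b ⊓ γ
          · have hab' : a ⊓ b ∉ clΓ γ C := fun h => hab (clΓ_subset_clγ h)
            obtain ⟨c, hc, hne⟩ := h2 a ha' b hb' heq hab'
            exact ⟨c, clΓ_subset_clγ hc, hne⟩
          · exact ⟨γ, hγC, heq⟩
        · refine ⟨γ, hγC, fun h => ?_⟩
          rw [heqb, inf_idem] at h
          exact notle a ha' (h ▸ inf_le_left)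
      · refine ⟨γ, hγC, fun h => ?_⟩
        rw [heqa, inf_idem] at h
        apply hab
        have hg : a ⊓ b = γ := by rw [heqa, inf_comm]; exact h.symm
        rw [hg]; exact hγC
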